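/- arXiv:2404.12293 — 4 statements merged into one kernel-verified Lean document; each statement's English description precedes it below -/
import Mathlib

section
/- Let (α_n) and (σ_n) be positive sequences with α_n → 0 and σ_n → σ₀ ≥ 0, and for each n let (Y_k^n)_{k∈ℕ} be i.i.d. centered Gaussian random variables with variance σ_n². Then for every T > 0 and every p ≥ 1, sup_{k ≤ T/(α_n² σ_n²)} α_n |Y_k^n|^p converges to 0 in probability as n → ∞. -/
/-!
A union bound over the `⌊T / (α² σ²)⌋ + 1` indices reduces the claim to the Gaussian tail
`P(|Y| > b) ≤ 2 exp(-b² / (2σ²))` at the level `b = (ε / α)^{1/p}`. Trading the exponential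
for a polynomial via `exp (-x) ≤ m! / x^m` with an integer `m > p` makes each term
`O(σ^{2m} α^{2m/p})`; as `2m/p > 2` and `σ` stays bounded, this beats the `α⁻² σ⁻²` indices
as `α → 0`.
-/

open MeasureTheory ProbabilityTheory Filter Real Topology
open scoped ENNReal NNReal Nat

lemma Real.exp_neg_le_factorial_div_pow (n : ℕ) {x : ℝ} (hx : 0 < x) :
    exp (-x) ≤ n ! / x ^ n := by
  have h := pow_div_factorial_le_exp x hx.le n
  rw [div_le_iff₀ (by positivity)] at h
  rw [exp_neg, le_div_iff₀ (by positivity), inv_mul_le_iff₀ (exp_pos x)]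
  linarith

lemma tendsto_div_add_one_mul_pow_mul_rpow_zero {α s : ℕ → ℝ} {s₀ T r : ℝ} {m : ℕ}
    (hα : ∀ n, 0 < α n) (hs : ∀ n, s n ≠ 0) (hα0 : Tendsto α atTop (𝓝 0))
    (hs0 : Tendsto s atTop (𝓝 s₀)) (hm : 1 ≤ m) (hr : 2 < r) :
    Tendsto (fun n ↦ (T / (α n ^ 2 * s n) + 1) * (s n ^ m * α n ^ r)) atTop (𝓝 0) := by
  obtain ⟨k, rfl⟩ : ∃ k, m = k + 1 := ⟨m - 1, by omega⟩
  have hsplit : ∀ n, (T / (α n ^ 2 * s n) + 1) * (s n ^ (k + 1) * α n ^ r)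
      = T * s n ^ k * α n ^ (r - 2) + s n ^ (k + 1) * α n ^ r := by
    intro n
    have := (hα n).ne'
    have := hs n
    rw [rpow_sub (hα n), rpow_two]
    field_simp
    ring
  have hpow : ∀ {t : ℝ}, 0 < t → Tendsto (fun n ↦ α n ^ t) atTop (𝓝 0) := fun ht ↦ by
    simpa [zero_rpow ht.ne'] using hα0.rpow_const (Or.inr ht.le)
  simp_rw [hsplit]
  simpa using ((tendsto_const_nhds.mul (hs0.pow k)).mul (hpow (by linarith))).add
    ((hs0.pow (k + 1)).mul (hpow (by linarith)))

namespace ProbabilityTheory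

variable {Ω : Type*} [MeasurableSpace Ω] {μ : Measure Ω}

lemma hasSubgaussianMGF_id_gaussianReal (v : ℝ≥0) :
    HasSubgaussianMGF id v (gaussianReal 0 v) where
  integrable_exp_mul t := integrable_exp_mul_gaussianReal t
  mgf_le t := by simp [mgf_id_gaussianReal]

lemma HasSubgaussianMGF.measureReal_abs_gt_le [IsFiniteMeasure μ] {X : Ω → ℝ} {c : ℝ≥0}
    (h : HasSubgaussianMGF X c μ) {b : ℝ} (hb : 0 ≤ b) :
    μ.real {ω | b < |X ω|} ≤ 2 * exp (-b ^ 2 / (2 * c)) :=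
  calc μ.real {ω | b < |X ω|} ≤ μ.real ({ω | b ≤ X ω} ∪ {ω | b ≤ (-X) ω}) :=
        measureReal_mono fun ω (hω : b < |X ω|) ↦ by
          rcases lt_abs.mp hω with h | h
          exacts [Or.inl h.le, Or.inr h.le]
    _ ≤ μ.real {ω | b ≤ X ω} + μ.real {ω | b ≤ (-X) ω} := measureReal_union_le _ _
    _ ≤ 2 * exp (-b ^ 2 / (2 * c)) := by
        linarith [h.measure_ge_le hb, h.neg.measure_ge_le hb]

lemma gaussianReal_real_lt_mul_abs_rpow_le {v : ℝ≥0} (hv : v ≠ 0) {α ε p : ℝ}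
    (hα : 0 < α) (hε : 0 < ε) (hp : 0 < p) (m : ℕ) :
    (gaussianReal 0 v).real {x | ε < α * |x| ^ p}
      ≤ 2 * m ! * (2 * v) ^ m * (α / ε) ^ (2 * m / p) := by
  set b := (ε / α) ^ p⁻¹
  have hb : 0 < b := by positivity
  have hset : {x : ℝ | ε < α * |x| ^ p} = {x | b < |x|} := by
    ext x
    change ε < α * |x| ^ p ↔ b < |x|
    rw [rpow_inv_lt_iff_of_pos (by positivity) (abs_nonneg x) hp, div_lt_iff₀' hα]
  have hb2m : (b ^ 2) ^ m = (ε / α) ^ (2 * m / p) := by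
    rw [← pow_mul, ← rpow_mul_natCast (by positivity)]
    congr 1
    push_cast
    ring
  have hv0 : (0 : ℝ) < v := by positivity
  calc (gaussianReal 0 v).real {x | ε < α * |x| ^ p}
      ≤ 2 * exp (-(b ^ 2 / (2 * v))) := by
        rw [hset, neg_div']
        exact (hasSubgaussianMGF_id_gaussianReal v).measureReal_abs_gt_le hb.le
    _ ≤ 2 * (m ! / (b ^ 2 / (2 * v)) ^ m) := by
        gcongr
        exact exp_neg_le_factorial_div_pow m (by positivity)
    _ = 2 * m ! * (2 * v) ^ m * (α / ε) ^ (2 * m / p) := by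
        rw [div_pow, hb2m, div_rpow hα.le hε.le, div_rpow hε.le hα.le]
        field_simp

lemma measureReal_exists_le_mem_le {β : Type*} [MeasurableSpace β]
    {ν : Measure β} [NeZero ν] {Y : ℕ → Ω → β} (hY : ∀ k, μ.map (Y k) = ν)
    {S : Set β} (hS : MeasurableSet S) (N : ℕ) :
    μ.real {ω | ∃ k ≤ N, Y k ω ∈ S} ≤ (N + 1) * ν.real S := by
  have hset : {ω | ∃ k ≤ N, Y k ω ∈ S} = ⋃ k ∈ Finset.range (N + 1), Y k ⁻¹' S := by
    ext ω
    simp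
  have hk : ∀ k, μ.real (Y k ⁻¹' S) = ν.real S := fun k ↦ by
    have hYk : AEMeasurable (Y k) μ := aemeasurable_of_map_neZero (by rw [hY k]; infer_instance)
    rw [← map_measureReal_apply_of_aemeasurable hYk hS, hY k]
  calc μ.real {ω | ∃ k ≤ N, Y k ω ∈ S}
      ≤ ∑ k ∈ Finset.range (N + 1), μ.real (Y k ⁻¹' S) := by
        rw [hset]
        exact measureReal_biUnion_finset_le _ _
    _ = (N + 1) * ν.real S := by simp [hk]

lemma measureReal_exists_le_lt_mul_abs_rpow_le {Y : ℕ → Ω → ℝ} {v : ℝ≥0}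
    (hv : v ≠ 0) (hY : ∀ k, μ.map (Y k) = gaussianReal 0 v) {α ε p : ℝ} (hα : 0 < α)
    (hε : 0 < ε) (hp : 0 < p) (m N : ℕ) :
    μ.real {ω | ∃ k ≤ N, ε < α * |Y k ω| ^ p}
      ≤ (N + 1) * (2 * m ! * (2 * v) ^ m * (α / ε) ^ (2 * m / p)) :=
  (measureReal_exists_le_mem_le hY (measurableSet_lt measurable_const (by fun_prop)) N).trans
    (mul_le_mul_of_nonneg_left (gaussianReal_real_lt_mul_abs_rpow_le hv hα hε hp m)
      (by positivity))

end ProbabilityTheory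

theorem gaussian_noise_decay_general
    {Ω : Type*} [MeasurableSpace Ω] (μ : Measure Ω) [IsProbabilityMeasure μ]
    (α σ : ℕ → ℝ) (σ₀ : ℝ) (hα : ∀ n, 0 < α n) (hσ : ∀ n, 0 < σ n)
    (hα0 : Tendsto α atTop (nhds 0)) (hσ0 : Tendsto σ atTop (nhds σ₀))
    (Y : ℕ → ℕ → Ω → ℝ)
    (hgauss : ∀ n k, Measure.map (Y n k) μ = gaussianReal 0 (⟨(σ n) ^ 2, sq_nonneg _⟩ : NNReal))
    (T : ℝ) (hT : 0 < T) (p : ℝ) (hp : 1 ≤ p) :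
    ∀ ε > 0,
      Tendsto
        (fun n =>
          μ {ω | ∃ k ≤ Nat.floor (T / ((α n) ^ 2 * (σ n) ^ 2)),
              ε < α n * |Y n k ω| ^ p})
        atTop (nhds 0) := by
  intro ε hε
  have hp0 : 0 < p := by linarith
  obtain ⟨m, hpm⟩ := exists_nat_gt p
  have hm : 1 ≤ m := by exact_mod_cast hp.trans hpm.le
  have hr : 2 < 2 * m / p := by rw [lt_div_iff₀ hp0]; linarith
  have hlim := (tendsto_div_add_one_mul_pow_mul_rpow_zero hα (fun n ↦ (pow_pos (hσ n) 2).ne')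
    hα0 (hσ0.pow 2) hm hr (T := T)).const_mul (2 * m ! * 2 ^ m / ε ^ (2 * m / p))
  rw [mul_zero] at hlim
  rw [← ENNReal.tendsto_toReal_zero_iff]
  refine squeeze_zero (fun n ↦ measureReal_nonneg) (fun n ↦ ?_) hlim
  have hv : (⟨σ n ^ 2, sq_nonneg _⟩ : ℝ≥0) ≠ 0 := by
    simpa [← NNReal.coe_ne_zero] using (hσ n).ne'
  calc _ ≤ (⌊T / (α n ^ 2 * σ n ^ 2)⌋₊ + 1)
        * (2 * m ! * (2 * σ n ^ 2) ^ m * (α n / ε) ^ (2 * m / p)) :=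
        measureReal_exists_le_lt_mul_abs_rpow_le hv (hgauss n) (hα n) hε hp0 m _
    _ ≤ (T / (α n ^ 2 * σ n ^ 2) + 1)
        * (2 * m ! * (2 * σ n ^ 2) ^ m * (α n / ε) ^ (2 * m / p)) := by
        have := hα n
        have := hσ n
        gcongr
        exact Nat.floor_le (by positivity)
    _ = _ := by
        rw [mul_pow, div_rpow (hα n).le hε.le]
        ring

/-- **Gaussian filters satisfy the noise-decay condition.**
If `α n → 0` and `σ n → σ₀ ≥ 0` are positive sequences and, for each `n`,
`(Y n k)_k` are i.i.d. centered Gaussian random variables with variance `σ n ^ 2`,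
then for every `T > 0` and every `p ≥ 1`,
`sup_{k ≤ ⌊T / (α n ^ 2 * σ n ^ 2)⌋} α n * |Y n k|^p → 0` in probability as `n → ∞`. -/
theorem gaussian_noise_decay
    {Ω : Type*} [MeasurableSpace Ω] (μ : Measure Ω) [IsProbabilityMeasure μ]
    (α σ : ℕ → ℝ) (σ₀ : ℝ) (hα : ∀ n, 0 < α n) (hσ : ∀ n, 0 < σ n)
    (hα0 : Tendsto α atTop (nhds 0)) (hσ0 : Tendsto σ atTop (nhds σ₀)) (hσ₀ : 0 ≤ σ₀)
    (Y : ℕ → ℕ → Ω → ℝ)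
    (hmeas : ∀ n k, Measurable (Y n k))
    (hindep : ∀ n, iIndepFun (Y n) μ)
    (hgauss : ∀ n k, Measure.map (Y n k) μ = gaussianReal 0 (⟨(σ n) ^ 2, sq_nonneg _⟩ : NNReal))
    (T : ℝ) (hT : 0 < T) (p : ℝ) (hp : 1 ≤ p) :
    ∀ ε > 0,
      Tendsto
        (fun n =>
          μ {ω | ∃ k ≤ Nat.floor (T / ((α n) ^ 2 * (σ n) ^ 2)),
              ε < α n * |Y n k ω| ^ p})
        atTop (nhds 0) :=
  gaussian_noise_decay_general μ α σ σ₀ hα hσ hα0 hσ0 Y hgauss T hT p hp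
end

section
/- Let L : ℝ^m → ℝ be C³ with locally Lipschitz derivatives and define, for inverted unit vectors ě_j := (1,…,1,0,1,…,1) (zero in position j), the Bernoulli-DropConnect regularizer Reg(w) := ∇L(w)·w + Σ_{j=1}^m (L(w ⊙ ě_j) − L(w)). Let η ∈ ℝ^m have i.i.d. coordinates with P(η_j = −1) = p, P(η_j = p/(1−p)) = 1 − p, and let σ² = p/(1−p). Then as p → 0, E_η[∇_w (L(w⊙(1+η)))] − ∇L(w) = σ² ∇Reg(w) + O(p²) uniformly for w in compact sets. -/
open Finset

noncomputable section BDC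
variable {m : ℕ}

/-! ### quadratic Taylor bound -/

theorem quad_taylor_bound {F : Type*} [NormedAddCommGroup F] [NormedSpace ℝ F]
    {f f1 f2 : ℝ → F} {C q : ℝ}
    (h1 : ∀ s, HasDerivAt f (f1 s) s) (h2 : ∀ s, HasDerivAt f1 (f2 s) s)
    (hf0 : f 0 = 0) (hf10 : f1 0 = 0) (hq : 0 ≤ q)
    (hC : ∀ s ∈ Set.Icc (0:ℝ) q, ‖f2 s‖ ≤ C) : ‖f q‖ ≤ C * q ^ 2 := by
  rcases eq_or_lt_of_le hq with rfl | hq'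
  · simp [hf0]
  have hC0 : 0 ≤ C := le_trans (norm_nonneg _) (hC 0 ⟨le_rfl, hq⟩)
  have key1 : ∀ s ∈ Set.Icc (0:ℝ) q, ‖f1 s‖ ≤ C * s := by
    intro s hs
    have := (convex_Icc (0:ℝ) q).norm_image_sub_le_of_norm_hasDerivWithin_le
      (f := f1) (f' := f2) (fun x hx => (h2 x).hasDerivWithinAt) hC ⟨le_rfl, hq⟩ hs
    simpa [hf10, Real.norm_eq_abs, abs_of_nonneg hs.1] using this
  have key2 : ∀ x ∈ Set.Icc (0:ℝ) q, ‖f x‖ ≤ C * x ^ 2 := by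
    apply image_norm_le_of_norm_deriv_right_le_deriv_boundary
      (f' := f1) (B := fun s => C * s ^ 2) (B' := fun s => C * (2 * s))
      (fun x _ => (h1 x).continuousAt.continuousWithinAt)
      (fun x hx => (h1 x).hasDerivWithinAt)
      (by simp [hf0])
      (fun x => by simpa using (hasDerivAt_pow 2 x).const_mul C)
    intro x hx
    calc ‖f1 x‖ ≤ C * x := key1 x ⟨hx.1, le_of_lt hx.2⟩
    _ ≤ C * (2 * x) := by nlinarith [hx.1]
  exact key2 q ⟨hq, le_rfl⟩

/-! ### coordinatewise multiplication -/

def mulCLM (t : Fin m → ℝ) : (Fin m → ℝ) →L[ℝ] (Fin m → ℝ) :=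
  ContinuousLinearMap.pi fun i => t i • ContinuousLinearMap.proj i

@[simp] lemma mulCLM_apply (t w : Fin m → ℝ) (i : Fin m) : mulCLM t w i = t i * w i := rfl

lemma mulCLM_one : mulCLM (fun _ : Fin m => (1:ℝ)) = ContinuousLinearMap.id ℝ _ := by
  ext w i; simp

def eiv (j : Fin m) : Fin m → ℝ := fun i => if i = j then 0 else 1

def beta (b : Fin m → Bool) : Fin m → ℝ := fun i => if b i then 1 else 0

def bneq (j : Fin m) : Fin m → Bool := fun i => decide (i ≠ j)

lemma beta_bneq (j : Fin m) : beta (bneq j) = eiv j := by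
  funext i
  by_cases h : i = j <;> simp [beta, bneq, eiv, h]

lemma beta_true : beta (fun _ : Fin m => true) = fun _ => (1:ℝ) := by funext i; simp [beta]

def kk (b : Fin m → Bool) : ℕ := (univ.filter fun j => b j = false).card

lemma kk_true : kk (fun _ : Fin m => true) = 0 := by simp [kk]

lemma kk_eq_zero {b : Fin m → Bool} (h : kk b = 0) : b = fun _ => true := by
  funext i
  by_contra hb
  have hbi : b i = false := by revert hb; cases b i <;> simp
  have : i ∈ univ.filter fun j => b j = false := by simp [hbi]
  have := Finset.card_ne_zero_of_mem this
  exact this h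

lemma kk_bneq (j : Fin m) : kk (bneq j) = 1 := by
  have : (univ.filter fun i => bneq j i = false) = {j} := by
    ext i
    by_cases h : i = j <;> simp [bneq, h]
  simp [kk, this]

lemma bneq_inj : Function.Injective (bneq (m := m)) := by
  intro j j' h
  have := congrFun h j
  by_contra hne
  simp [bneq, hne] at this

lemma filter_kk_one : (univ.filter fun b : Fin m → Bool => kk b = 1) = univ.image bneq := by
  ext b
  simp only [mem_filter, mem_univ, true_and, mem_image]
  constructor
  · intro h
    obtain ⟨j, hj⟩ := Finset.card_eq_one.1 h
    refine ⟨j, ?_⟩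
    have hmem : ∀ i, (b i = false ↔ i = j) := by
      intro i
      constructor
      · intro hi
        have : i ∈ ({j} : Finset (Fin m)) := hj ▸ (by simp [hi])
        simpa using this
      · intro hi
        have hmemj : j ∈ univ.filter fun i' => b i' = false := by
          rw [hj]; exact Finset.mem_singleton_self j
        rw [hi]
        simpa using hmemj
    funext i
    by_cases h' : i = j
    · subst h'
      simp [bneq, (hmem i).2 rfl]
    · have hne : ¬ (b i = false) := fun hc => h' ((hmem i).1 hc)
      have hbt : b i = true := by revert hne; cases b i <;> simp
      simp [bneq, h', hbt]
  · rintro ⟨j, rfl⟩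
    exact kk_bneq j

/-- reindexing sums over `b` with `kk b = 1` by `j : Fin m` -/
lemma sum_kk_one {F : Type*} [AddCommMonoid F] (v : (Fin m → Bool) → F) :
    (∑ b : Fin m → Bool, if kk b = 1 then v b else 0) = ∑ j, v (bneq j) := by
  rw [← Finset.sum_filter, filter_kk_one, Finset.sum_image (fun a _ b _ h => bneq_inj h)]

lemma sum_kk_zero {F : Type*} [AddCommMonoid F] (v : (Fin m → Bool) → F) :
    (∑ b : Fin m → Bool, if kk b = 0 then v b else 0) = v (fun _ => true) := by
  rw [Finset.sum_eq_single (fun _ => true)]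
  · simp [kk_true]
  · intro b _ hb
    rw [if_neg (fun h => hb (kk_eq_zero h))]
  · simp

/-! ### the main objects -/

variable (L : (Fin m → ℝ) → ℝ)

/-- derivative of the regularizer -/
def Rreg (w : Fin m → ℝ) : (Fin m → ℝ) →L[ℝ] ℝ :=
  (fderiv ℝ (fderiv ℝ L) w w + fderiv ℝ L w)
    + ∑ j, ((fderiv ℝ L (mulCLM (eiv j) w)).comp (mulCLM (eiv j)) - fderiv ℝ L w)

def h0 (b : Fin m → Bool) (q : ℝ) (w : Fin m → ℝ) : (Fin m → ℝ) →L[ℝ] ℝ :=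
  (fderiv ℝ L ((1+q) • mulCLM (beta b) w)).comp (mulCLM (beta b))

def h1 (b : Fin m → Bool) (q : ℝ) (w : Fin m → ℝ) : (Fin m → ℝ) →L[ℝ] ℝ :=
  ((fderiv ℝ (fderiv ℝ L) ((1+q) • mulCLM (beta b) w)) (mulCLM (beta b) w)).comp
    (mulCLM (beta b))

def h2 (b : Fin m → Bool) (q : ℝ) (w : Fin m → ℝ) : (Fin m → ℝ) →L[ℝ] ℝ :=
  ((fderiv ℝ (fderiv ℝ (fderiv ℝ L)) ((1+q) • mulCLM (beta b) w)) (mulCLM (beta b) w)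
     (mulCLM (beta b) w)).comp (mulCLM (beta b))

def P0 (b : Fin m → Bool) (q : ℝ) : ℝ := q ^ kk b * (1+q)
def P1 (b : Fin m → Bool) (q : ℝ) : ℝ := (kk b : ℝ) * q ^ (kk b - 1) * (1+q) + q ^ kk b
def P2 (b : Fin m → Bool) (q : ℝ) : ℝ :=
  (kk b : ℝ) * ((kk b - 1 : ℕ) * q ^ (kk b - 1 - 1)) * (1+q) + (kk b : ℝ) * q ^ (kk b - 1)
    + (kk b : ℝ) * q ^ (kk b - 1)

def Psi (q : ℝ) (w : Fin m → ℝ) : (Fin m → ℝ) →L[ℝ] ℝ :=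
  (∑ b : Fin m → Bool, P0 b q • h0 L b q w) - (1+q)^m • fderiv ℝ L w
    - (q * (1+q)^m) • Rreg L w

def Psi1 (q : ℝ) (w : Fin m → ℝ) : (Fin m → ℝ) →L[ℝ] ℝ :=
  (∑ b : Fin m → Bool, (P0 b q • h1 L b q w + P1 b q • h0 L b q w))
    - ((m : ℝ) * (1+q)^(m-1)) • fderiv ℝ L w
    - ((1+q)^m + q * ((m:ℝ) * (1+q)^(m-1))) • Rreg L w

def Psi2 (q : ℝ) (w : Fin m → ℝ) : (Fin m → ℝ) →L[ℝ] ℝ :=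
  (∑ b : Fin m → Bool, ((P0 b q • h2 L b q w + P1 b q • h1 L b q w)
      + (P1 b q • h1 L b q w + P2 b q • h0 L b q w)))
    - ((m : ℝ) * ((m-1 : ℕ) * (1+q)^(m-1-1))) • fderiv ℝ L w
    - ((m:ℝ) * (1+q)^(m-1) + ((m:ℝ) * (1+q)^(m-1) + q * ((m:ℝ) * ((m-1:ℕ) * (1+q)^(m-1-1))))) • Rreg L w

variable {L}

/-! ### regularity facts -/

lemma hDiff (hL : ContDiff ℝ 3 L) : Differentiable ℝ L := hL.differentiable (by norm_num)

lemma contDiffD (hL : ContDiff ℝ 3 L) : ContDiff ℝ 2 (fderiv ℝ L) :=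
  hL.fderiv_right (m := 2) (by norm_num)

lemma contDiffD2 (hL : ContDiff ℝ 3 L) : ContDiff ℝ 1 (fderiv ℝ (fderiv ℝ L)) :=
  (contDiffD hL).fderiv_right (m := 1) (by norm_num)

lemma hDiffD (hL : ContDiff ℝ 3 L) : Differentiable ℝ (fderiv ℝ L) :=
  (contDiffD hL).differentiable (by norm_num)

lemma hDiffD2 (hL : ContDiff ℝ 3 L) : Differentiable ℝ (fderiv ℝ (fderiv ℝ L)) :=
  (contDiffD2 hL).differentiable (by norm_num)

@[reducible] def instNACG1 : NormedAddCommGroup ((Fin m → ℝ) →L[ℝ] ℝ) :=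
  ContinuousLinearMap.toNormedAddCommGroup (E := Fin m → ℝ) (F := ℝ)
@[reducible] def instNS1 : NormedSpace ℝ ((Fin m → ℝ) →L[ℝ] ℝ) :=
  ContinuousLinearMap.toNormedSpace (E := Fin m → ℝ) (F := ℝ)
attribute [local instance] instNACG1 instNS1

lemma contD3 (hL : ContDiff ℝ 3 L) : Continuous (fderiv ℝ (fderiv ℝ (fderiv ℝ L))) :=
  ((contDiffD2 hL).fderiv_right (m := 0) (by norm_num)).continuous

lemma chainRule (hL : ContDiff ℝ 3 L) (t w : Fin m → ℝ) :
    fderiv ℝ (fun w' => L (mulCLM t w')) w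
      = (fderiv ℝ L (mulCLM t w)).comp (mulCLM t) :=
  (((hL.differentiable (by norm_num)) (mulCLM t w)).hasFDerivAt.comp w
    (mulCLM t).hasFDerivAt).fderiv

/-! ### the regularizer derivative -/

lemma dropFun_eq (j : Fin m) (w' : Fin m → ℝ) :
    (fun i => if i = j then 0 else w' i) = mulCLM (eiv j) w' := by
  funext i; by_cases h : i = j <;> simp [eiv, h]

lemma reg_hasFDeriv (hL : ContDiff ℝ 3 L) (w : Fin m → ℝ) :
    HasFDerivAt (fun w' => fderiv ℝ L w' w' +
        ∑ j, (L (fun i => if i = j then 0 else w' i) - L w')) (Rreg L w) w := by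
  have hD : ∀ y, HasFDerivAt L (fderiv ℝ L y) y := fun y => ((hDiff hL) y).hasFDerivAt
  have hD2 : HasFDerivAt (fderiv ℝ L) (fderiv ℝ (fderiv ℝ L) w) w := ((hDiffD hL) w).hasFDerivAt
  have hsym : ∀ v u, fderiv ℝ (fderiv ℝ L) w v u = fderiv ℝ (fderiv ℝ L) w u v :=
    second_derivative_symmetric hD hD2
  have h1 : HasFDerivAt (fun w' => fderiv ℝ L w' w')
      (fderiv ℝ (fderiv ℝ L) w w + fderiv ℝ L w) w := by
    have := hD2.clm_apply (hasFDerivAt_id w)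
    refine this.congr_fderiv ?_
    ext v
    simp [hsym w v, add_comm]
  have h2 : ∀ j : Fin m, HasFDerivAt (fun w' => L (fun i => if i = j then 0 else w' i) - L w')
      ((fderiv ℝ L (mulCLM (eiv j) w)).comp (mulCLM (eiv j)) - fderiv ℝ L w) w := by
    intro j
    have hcomp : HasFDerivAt (fun w' => L (mulCLM (eiv j) w'))
        ((fderiv ℝ L (mulCLM (eiv j) w)).comp (mulCLM (eiv j))) w :=
      (hD (mulCLM (eiv j) w)).comp w (mulCLM (eiv j)).hasFDerivAt
    rw [show (fun w' : Fin m → ℝ => L (fun i => if i = j then 0 else w' i) - L w')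
        = fun w' => L (mulCLM (eiv j) w') - L w' from funext fun w' => by rw [dropFun_eq]]
    exact hcomp.sub (hD w)
  exact h1.add (HasFDerivAt.fun_sum (fun j _ => h2 j))


/-! ### derivatives in q -/

def compMul (b : Fin m → Bool) :
    ((Fin m → ℝ) →L[ℝ] ℝ) →L[ℝ] ((Fin m → ℝ) →L[ℝ] ℝ) :=
  (ContinuousLinearMap.compL ℝ (Fin m → ℝ) (Fin m → ℝ) ℝ).flip (mulCLM (beta b))

lemma compMul_apply (b : Fin m → Bool) (A : (Fin m → ℝ) →L[ℝ] ℝ) :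
    compMul b A = A.comp (mulCLM (beta b)) := rfl

lemma hasDerivAt_h0 (hL : ContDiff ℝ 3 L) (b : Fin m → Bool) (q : ℝ) (w : Fin m → ℝ) :
    HasDerivAt (fun q' => h0 L b q' w) (h1 L b q w) q := by
  set u := mulCLM (beta b) w with hu
  have hg : HasDerivAt (fun q' : ℝ => (1+q') • u) u q := by
    simpa using ((hasDerivAt_id q).const_add 1).smul_const u
  have hDg : HasDerivAt (fun q' => fderiv ℝ L ((1+q') • u))
      (fderiv ℝ (fderiv ℝ L) ((1+q) • u) u) q :=
    (((hDiffD hL) _).hasFDerivAt).comp_hasDerivAt q hg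
  exact ((compMul b).hasFDerivAt).comp_hasDerivAt q hDg

lemma hasDerivAt_h1 (hL : ContDiff ℝ 3 L) (b : Fin m → Bool) (q : ℝ) (w : Fin m → ℝ) :
    HasDerivAt (fun q' => h1 L b q' w) (h2 L b q w) q := by
  set u := mulCLM (beta b) w with hu
  have hg : HasDerivAt (fun q' : ℝ => (1+q') • u) u q := by
    simpa using ((hasDerivAt_id q).const_add 1).smul_const u
  have hDg : HasDerivAt (fun q' => fderiv ℝ (fderiv ℝ L) ((1+q') • u))
      (fderiv ℝ (fderiv ℝ (fderiv ℝ L)) ((1+q) • u) u) q :=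
    (((hDiffD2 hL) _).hasFDerivAt).comp_hasDerivAt q hg
  exact (((compMul b).comp
    (ContinuousLinearMap.apply ℝ ((Fin m → ℝ) →L[ℝ] ℝ) u)).hasFDerivAt).comp_hasDerivAt q hDg

lemma hasDerivAt_P0 (b : Fin m → Bool) (q : ℝ) : HasDerivAt (P0 b) (P1 b q) q := by
  have := (hasDerivAt_pow (kk b) q).mul (((hasDerivAt_id q).const_add 1))
  exact this.congr_deriv (by simp [P1])

lemma hasDerivAt_P1 (b : Fin m → Bool) (q : ℝ) : HasDerivAt (P1 b) (P2 b q) q := by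
  have t2 := ((hasDerivAt_pow (kk b - 1) q).const_mul (kk b : ℝ)).mul
    (((hasDerivAt_id q).const_add 1))
  have t3 := hasDerivAt_pow (kk b) q
  have := t2.add t3
  exact this.congr_deriv (by simp [P2])

def Ac (m : ℕ) (q : ℝ) : ℝ := (1+q)^m
def A1c (m : ℕ) (q : ℝ) : ℝ := (m:ℝ) * (1+q)^(m-1)
def A2c (m : ℕ) (q : ℝ) : ℝ := (m:ℝ) * ((m-1:ℕ) * (1+q)^(m-1-1))
def Bc (m : ℕ) (q : ℝ) : ℝ := q * Ac m q
def B1c (m : ℕ) (q : ℝ) : ℝ := Ac m q + q * A1c m q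
def B2c (m : ℕ) (q : ℝ) : ℝ := A1c m q + (A1c m q + q * A2c m q)

lemma hasDerivAt_Ac (q : ℝ) : HasDerivAt (Ac m) (A1c m q) q := by
  have := ((hasDerivAt_id q).const_add 1).pow m
  exact this.congr_deriv (by simp [A1c])

lemma hasDerivAt_A1c (q : ℝ) : HasDerivAt (A1c m) (A2c m q) q := by
  have := (((hasDerivAt_id q).const_add 1).pow (m-1)).const_mul (m:ℝ)
  exact this.congr_deriv (by simp [A2c])

lemma hasDerivAt_Bc (q : ℝ) : HasDerivAt (Bc m) (B1c m q) q := by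
  have := (hasDerivAt_id q).mul (hasDerivAt_Ac (m := m) q)
  exact this.congr_deriv (by simp [B1c])

lemma hasDerivAt_B1c (q : ℝ) : HasDerivAt (B1c m) (B2c m q) q := by
  have := (hasDerivAt_Ac (m := m) q).add ((hasDerivAt_id q).mul (hasDerivAt_A1c (m := m) q))
  exact this.congr_deriv (by simp [B2c])


lemma hasDerivAt_Psi (hL : ContDiff ℝ 3 L) (q : ℝ) (w : Fin m → ℝ) :
    HasDerivAt (fun q' => Psi L q' w) (Psi1 L q w) q := by
  refine HasDerivAt.sub (HasDerivAt.sub ?_ ?_) ?_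
  · exact HasDerivAt.fun_sum fun b _ => (hasDerivAt_P0 b q).smul (hasDerivAt_h0 hL b q w)
  · exact (hasDerivAt_Ac q).smul_const _
  · exact (hasDerivAt_Bc q).smul_const _

lemma hasDerivAt_Psi1 (hL : ContDiff ℝ 3 L) (q : ℝ) (w : Fin m → ℝ) :
    HasDerivAt (fun q' => Psi1 L q' w) (Psi2 L q w) q := by
  refine HasDerivAt.sub (HasDerivAt.sub ?_ ?_) ?_
  · exact HasDerivAt.fun_sum fun b _ =>
      ((hasDerivAt_P0 b q).smul (hasDerivAt_h1 hL b q w)).add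
        ((hasDerivAt_P1 b q).smul (hasDerivAt_h0 hL b q w))
  · exact (hasDerivAt_A1c q).smul_const _
  · exact (hasDerivAt_B1c q).smul_const _

/-! ### values at 0 -/

lemma P0_zero (b : Fin m → Bool) : P0 b 0 = if kk b = 0 then 1 else 0 := by
  by_cases h : kk b = 0 <;> simp [P0, h, zero_pow]

lemma P1_zero (b : Fin m → Bool) :
    P1 b 0 = (if kk b = 1 then 1 else 0) + (if kk b = 0 then 1 else 0) := by
  rcases hk : kk b with _ | n
  · simp [P1, hk]
  · rcases n with _ | l
    · simp [P1, hk]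
    · simp [P1, hk, zero_pow]

lemma h0_true_zero (w : Fin m → ℝ) : h0 L (fun _ => true) 0 w = fderiv ℝ L w := by
  rw [h0, beta_true, mulCLM_one]
  norm_num

lemma h1_true_zero (w : Fin m → ℝ) :
    h1 L (fun _ => true) 0 w = fderiv ℝ (fderiv ℝ L) w w := by
  rw [h1, beta_true, mulCLM_one]
  norm_num

lemma h0_bneq_zero (j : Fin m) (w : Fin m → ℝ) :
    h0 L (bneq j) 0 w = (fderiv ℝ L (mulCLM (eiv j) w)).comp (mulCLM (eiv j)) := by
  rw [h0, beta_bneq]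
  norm_num

lemma Psi_zero (w : Fin m → ℝ) : Psi L 0 w = 0 := by
  have hsum : (∑ b : Fin m → Bool, P0 b 0 • h0 L b 0 w) = fderiv ℝ L w := by
    have : ∀ b : Fin m → Bool, P0 b 0 • h0 L b 0 w
        = if kk b = 0 then h0 L b 0 w else 0 := by
      intro b
      rw [P0_zero]
      by_cases h : kk b = 0 <;> simp [h]
    rw [Finset.sum_congr rfl fun b _ => this b, sum_kk_zero, h0_true_zero]
  rw [Psi, hsum]
  norm_num

lemma Psi1_zero (w : Fin m → ℝ) : Psi1 L 0 w = 0 := by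
  have hsum : (∑ b : Fin m → Bool, (P0 b 0 • h1 L b 0 w + P1 b 0 • h0 L b 0 w))
      = fderiv ℝ (fderiv ℝ L) w w + (fderiv ℝ L w
          + ∑ j, (fderiv ℝ L (mulCLM (eiv j) w)).comp (mulCLM (eiv j))) := by
    rw [Finset.sum_add_distrib]
    have e1 : (∑ b : Fin m → Bool, P0 b 0 • h1 L b 0 w)
        = fderiv ℝ (fderiv ℝ L) w w := by
      have : ∀ b : Fin m → Bool, P0 b 0 • h1 L b 0 w
          = if kk b = 0 then h1 L b 0 w else 0 := by
        intro b; rw [P0_zero]; by_cases h : kk b = 0 <;> simp [h]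
      rw [Finset.sum_congr rfl fun b _ => this b, sum_kk_zero, h1_true_zero]
    have e2 : (∑ b : Fin m → Bool, P1 b 0 • h0 L b 0 w)
        = fderiv ℝ L w + ∑ j, (fderiv ℝ L (mulCLM (eiv j) w)).comp (mulCLM (eiv j)) := by
      have : ∀ b : Fin m → Bool, P1 b 0 • h0 L b 0 w
          = (if kk b = 1 then h0 L b 0 w else 0) + (if kk b = 0 then h0 L b 0 w else 0) := by
        intro b; rw [P1_zero, add_smul]
        by_cases h : kk b = 1 <;> by_cases h' : kk b = 0 <;> simp [h, h']
      rw [Finset.sum_congr rfl fun b _ => this b, Finset.sum_add_distrib, sum_kk_zero,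
        sum_kk_one, h0_true_zero]
      rw [Finset.sum_congr rfl fun j _ => h0_bneq_zero j w]
      abel
    rw [e1, e2]
  rw [Psi1, hsum, Rreg]
  have hconst : (∑ _j : Fin m, fderiv ℝ L w) = (m:ℝ) • fderiv ℝ L w := by
    simp [Finset.sum_const]
    exact (Nat.cast_smul_eq_nsmul ℝ m _).symm
  rw [Finset.sum_sub_distrib, hconst]
  norm_num
  abel


/-! ### continuity of Psi2 -/

lemma cont_Rreg (hL : ContDiff ℝ 3 L) : Continuous (Rreg L) := by
  unfold Rreg
  refine Continuous.add ?_ (continuous_finset_sum _ fun j _ => ?_)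
  · exact (((contDiffD2 hL).continuous).clm_apply continuous_id).add (contDiffD hL).continuous
  · refine Continuous.sub ?_ (contDiffD hL).continuous
    exact ((ContinuousLinearMap.compL ℝ (Fin m → ℝ) (Fin m → ℝ) ℝ).flip
      (mulCLM (eiv j))).continuous.comp
      ((contDiffD hL).continuous.comp (mulCLM (eiv j)).continuous)

lemma cont_h0 (hL : ContDiff ℝ 3 L) (b : Fin m → Bool) :
    Continuous fun z : ℝ × (Fin m → ℝ) => h0 L b z.1 z.2 := by
  refine (compMul b).continuous.comp ((contDiffD hL).continuous.comp ?_)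
  exact (continuous_const.add continuous_fst).smul
    ((mulCLM (beta b)).continuous.comp continuous_snd)

lemma cont_h1 (hL : ContDiff ℝ 3 L) (b : Fin m → Bool) :
    Continuous fun z : ℝ × (Fin m → ℝ) => h1 L b z.1 z.2 := by
  have hu : Continuous fun z : ℝ × (Fin m → ℝ) => mulCLM (beta b) z.2 :=
    (mulCLM (beta b)).continuous.comp continuous_snd
  have hg : Continuous fun z : ℝ × (Fin m → ℝ) => (1 + z.1) • mulCLM (beta b) z.2 :=
    (continuous_const.add continuous_fst).smul hu
  exact (compMul b).continuous.comp
    (Continuous.clm_apply ((contDiffD2 hL).continuous.comp hg) hu)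

lemma cont_h2 (hL : ContDiff ℝ 3 L) (b : Fin m → Bool) :
    Continuous fun z : ℝ × (Fin m → ℝ) => h2 L b z.1 z.2 := by
  have hu : Continuous fun z : ℝ × (Fin m → ℝ) => mulCLM (beta b) z.2 :=
    (mulCLM (beta b)).continuous.comp continuous_snd
  have hg : Continuous fun z : ℝ × (Fin m → ℝ) => (1 + z.1) • mulCLM (beta b) z.2 :=
    (continuous_const.add continuous_fst).smul hu
  exact (compMul b).continuous.comp
    (Continuous.clm_apply (Continuous.clm_apply ((contD3 hL).comp hg) hu) hu)

lemma cont_P0 (b : Fin m → Bool) : Continuous (P0 b) := by unfold P0; fun_prop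
lemma cont_P1 (b : Fin m → Bool) : Continuous (P1 b) := by unfold P1; fun_prop
lemma cont_P2 (b : Fin m → Bool) : Continuous (P2 b) := by unfold P2; fun_prop

lemma cont_Psi2 (hL : ContDiff ℝ 3 L) :
    Continuous fun z : ℝ × (Fin m → ℝ) => Psi2 L z.1 z.2 := by
  unfold Psi2
  refine Continuous.sub (Continuous.sub (continuous_finset_sum _ fun b _ => ?_) ?_) ?_
  · exact (((cont_P0 b).comp continuous_fst).smul (cont_h2 hL b)).add
      (((cont_P1 b).comp continuous_fst).smul (cont_h1 hL b)) |>.add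
      ((((cont_P1 b).comp continuous_fst).smul (cont_h1 hL b)).add
        (((cont_P2 b).comp continuous_fst).smul (cont_h0 hL b)))
  · exact ((by fun_prop : Continuous fun q : ℝ => (m:ℝ) * ((m-1:ℕ) * (1+q)^(m-1-1))).comp
      continuous_fst).smul ((contDiffD hL).continuous.comp continuous_snd)
  · exact ((by fun_prop : Continuous fun q : ℝ =>
        (m:ℝ) * (1+q)^(m-1) + ((m:ℝ) * (1+q)^(m-1) + q * ((m:ℝ) * ((m-1:ℕ) * (1+q)^(m-1-1))))).comp
      continuous_fst).smul ((cont_Rreg hL).comp continuous_snd)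

end BDC

/-- **Expansion of the expected Bernoulli-DropConnect gradient.**
Let `L : ℝ^m → ℝ` be `C³` and let `η` have i.i.d. coordinates with
`P(η_j = -1) = p` and `P(η_j = p/(1-p)) = 1 - p`; the expectation over `η` is the
explicit finite sum over outcomes `b : Fin m → Bool`.  With the Bernoulli-DropConnect
regularizer `Reg(w) = ∇L(w)·w + ∑ j (L(w ⊙ ě_j) - L(w))` and `σ² = p/(1-p)`, one has
`E_η[∇_w L(w ⊙ (1+η))] - ∇L(w) = σ² ∇Reg(w) + O(p²)` uniformly on compact sets. -/
theorem bernoulli_dropconnect_expected_gradient_expansion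
    {m : ℕ} (L : (Fin m → ℝ) → ℝ) (hL : ContDiff ℝ 3 L) :
    ∀ K : Set (Fin m → ℝ), IsCompact K → ∃ C : ℝ,
      ∀ p ∈ Set.Ioc (0 : ℝ) (1 / 2), ∀ w ∈ K,
        ‖(∑ b : Fin m → Bool,
              (∏ j, if b j then (1 - p) else p) •
                fderiv ℝ
                  (fun w' => L (fun i => w' i * (1 + if b i then p / (1 - p) else -1))) w)
            - fderiv ℝ L w
            - (p / (1 - p)) •
                fderiv ℝ
                  (fun w' =>
                    fderiv ℝ L w' w' +
                      ∑ j, (L (fun i => if i = j then 0 else w' i) - L w')) w‖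
          ≤ C * p ^ 2 := by
  intro K hK
  obtain ⟨C, hC⟩ := (isCompact_Icc.prod hK).exists_bound_of_continuousOn
    ((cont_Psi2 hL).continuousOn)
  refine ⟨4 * max C 0, ?_⟩
  intro p hp w hw
  have hp0 : (0:ℝ) < p := hp.1
  have hp2 : p ≤ 1 / 2 := hp.2
  have h1p : (0:ℝ) < 1 - p := by linarith
  set q := p / (1 - p) with hqdef
  have hq0 : 0 ≤ q := le_of_lt (div_pos hp0 h1p)
  have hq1 : q ≤ 1 := by rw [hqdef, div_le_one h1p]; linarith
  have hq2p : q ≤ 2 * p := by rw [hqdef, div_le_iff₀ h1p]; nlinarith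
  have hpq : (1 - p) * (1 + q) = 1 := by rw [hqdef]; field_simp; ring
  -- Taylor bound on Psi
  have hPsiBound : ‖Psi L q w‖ ≤ max C 0 * q ^ 2 := by
    refine quad_taylor_bound (fun s => hasDerivAt_Psi hL s w)
      (fun s => hasDerivAt_Psi1 hL s w) (Psi_zero w) (Psi1_zero w) hq0 ?_
    intro s hs
    refine le_trans (hC (s, w) ?_) (le_max_left _ _)
    exact Set.mk_mem_prod ⟨hs.1, le_trans hs.2 hq1⟩ hw
  -- rewriting the expression
  have hterm : ∀ b : Fin m → Bool,
      (∏ j, if b j then (1 - p) else p) •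
          fderiv ℝ (fun w' => L (fun i => w' i * (1 + if b i then q else -1))) w
        = (1-p)^m • (P0 b q • h0 L b q w) := by
    intro b
    have hfun : (fun w' : Fin m → ℝ => L (fun i => w' i * (1 + if b i then q else -1)))
        = fun w' => L (mulCLM (fun i => (1+q) * beta b i) w') := by
      funext w'
      congr 1
      funext i
      rcases hb : b i <;> simp [beta, hb] <;> ring
    rw [hfun, chainRule hL]
    have hM : mulCLM (fun i => (1+q) * beta b i) = (1+q) • mulCLM (beta b) := by
      ext w'' i
      simp [mul_assoc]
    rw [hM]
    have hweight : (∏ j, if b j then (1 - p) else p) = (1-p)^m * q ^ kk b := by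
      have hfac : ∀ j, (if b j then (1-p) else p) = (1-p) * (if b j then 1 else q) := by
        intro j
        rcases b j
        · simp [hqdef]
          field_simp
        · simp
      rw [Finset.prod_congr rfl fun j _ => hfac j, Finset.prod_mul_distrib,
        Finset.prod_const, Finset.card_univ, Fintype.card_fin]
      congr 1
      rw [← Finset.prod_filter_mul_prod_filter_not Finset.univ (fun j => b j = false)]
      have e1 : ∏ j ∈ Finset.univ.filter (fun j => b j = false), (if b j then (1:ℝ) else q)
          = q ^ kk b := by
        rw [Finset.prod_congr rfl (fun j hj => ?_), Finset.prod_const]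
        · rfl
        · have : b j = false := (Finset.mem_filter.1 hj).2
          simp [this]
      have e2 : ∏ j ∈ Finset.univ.filter (fun j => ¬ b j = false), (if b j then (1:ℝ) else q)
          = 1 := by
        refine Finset.prod_eq_one fun j hj => ?_
        have : b j = true := by
          have := (Finset.mem_filter.1 hj).2
          revert this; cases b j <;> simp
        simp [this]
      rw [e1, e2, mul_one]
    rw [hweight]
    have happ : ((1+q) • mulCLM (beta b)) w = (1+q) • (mulCLM (beta b) w) := rfl
    have hcs : (fderiv ℝ L (((1+q) • mulCLM (beta b)) w)).comp ((1+q) • mulCLM (beta b))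
        = (1+q) • (fderiv ℝ L ((1+q) • mulCLM (beta b) w)).comp (mulCLM (beta b)) := by
      ext v
      simp [happ]
    rw [hcs]
    rw [smul_smul, smul_smul]
    congr 1
    rw [P0]; ring
  have hreg : fderiv ℝ (fun w' => fderiv ℝ L w' w' +
      ∑ j, (L (fun i => if i = j then 0 else w' i) - L w')) w = Rreg L w :=
    (reg_hasFDeriv hL w).fderiv
  have key : (∑ b : Fin m → Bool,
        (∏ j, if b j then (1 - p) else p) •
          fderiv ℝ (fun w' => L (fun i => w' i * (1 + if b i then q else -1))) w)
      - fderiv ℝ L w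
      - q • fderiv ℝ (fun w' => fderiv ℝ L w' w' +
          ∑ j, (L (fun i => if i = j then 0 else w' i) - L w')) w
      = (1-p)^m • Psi L q w := by
    rw [Finset.sum_congr rfl fun b _ => hterm b, ← Finset.smul_sum, hreg]
    have hpow : (1-p)^m * (1+q)^m = 1 := by rw [← mul_pow, hpq, one_pow]
    have h3 : (1-p)^m * (q*(1+q)^m) = q := by
      rw [mul_comm q, ← mul_assoc, hpow, one_mul]
    rw [Psi, smul_sub, smul_sub, smul_smul, smul_smul, hpow, h3, one_smul]
  rw [key, norm_smul]
  have hn1 : ‖(1-p)^m‖ ≤ 1 := by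
    rw [Real.norm_eq_abs, abs_of_pos (pow_pos h1p m)]
    exact pow_le_one₀ (le_of_lt h1p) (by linarith)
  calc ‖(1-p)^m‖ * ‖Psi L q w‖ ≤ 1 * ‖Psi L q w‖ :=
        mul_le_mul_of_nonneg_right hn1 (norm_nonneg _)
    _ = ‖Psi L q w‖ := one_mul _
    _ ≤ max C 0 * q ^ 2 := hPsiBound
    _ ≤ max C 0 * (2*p) ^ 2 := by
        refine mul_le_mul_of_nonneg_left ?_ (le_max_right C 0)
        exact pow_le_pow_left₀ hq0 hq2p 2
    _ = 4 * max C 0 * p ^ 2 := by ring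
end

section
/- For label noise on the zero-loss set, the covariance matrix of the noise equals (2/N) times the Hessian of the loss: with notation as above, define Σ(w)_{kl} := Σ_{i=1}^N ∂_{w_k} f(w)_i ∂_{w_l} f(w)_i where f(w)_i = −(2/N)(f_w(x_i) − y_i). Then for any w with L(w) = 0 (and f_w being C²), Σ(w) = (2/N) ∇²L(w). -/
/-!
Each residual `gᵢ(w) = f_w(xᵢ) - yᵢ` vanishes on the zero-loss set, since `L` is a mean of their
squares. The Hessian of `gᵢ²` is `2 (∇gᵢ ∇gᵢᵀ + gᵢ ∇²gᵢ)`, so at a common zero only the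
Gauss–Newton part `(2/N) ∑ᵢ ∇gᵢ ∇gᵢᵀ` of `∇²L` survives, and both sides equal
`(4/N²) ∑ᵢ ∇gᵢ ∇gᵢᵀ`.
-/

section

variable {E : Type*} [NormedAddCommGroup E] [NormedSpace ℝ E]

theorem iteratedFDeriv_two_sq_apply_of_eq_zero {g : E → ℝ} (hg : ContDiff ℝ 2 g) {w : E}
    (hw : g w = 0) (u v : E) :
    iteratedFDeriv ℝ 2 (fun z => g z ^ 2) w ![u, v] = 2 * (fderiv ℝ g w u * fderiv ℝ g w v) := by
  have hg_diff : Differentiable ℝ g := hg.differentiable two_ne_zero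
  have hDg_diff : Differentiable ℝ (fderiv ℝ g) :=
    (hg.fderiv_right (m := 1) le_rfl).differentiable one_ne_zero
  have hD : fderiv ℝ (fun z => g z ^ 2) = fun z => (2 * g z) • fderiv ℝ g z := by
    ext z : 1
    rw [fderiv_fun_pow 2 (hg_diff z)]
    norm_num
  have hDD := ((hg_diff w).hasFDerivAt.const_mul 2).fun_smul (hDg_diff w).hasFDerivAt
  rw [iteratedFDeriv_two_apply, hD, hDD.fderiv]
  simp [hw]
  ring

theorem iteratedFDeriv_two_sum_sq_apply_of_eq_zero {ι : Type*} {s : Finset ι} {g : ι → E → ℝ}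
    (hg : ∀ i ∈ s, ContDiff ℝ 2 (g i)) {w : E} (hw : ∀ i ∈ s, g i w = 0) (u v : E) :
    iteratedFDeriv ℝ 2 (fun z => ∑ i ∈ s, g i z ^ 2) w ![u, v] =
      ∑ i ∈ s, 2 * (fderiv ℝ (g i) w u * fderiv ℝ (g i) w v) := by
  rw [iteratedFDeriv_fun_sum_apply fun i hi => ((hg i hi).pow 2).contDiffAt, sum_apply]
  exact Finset.sum_congr rfl fun i hi =>
    iteratedFDeriv_two_sq_apply_of_eq_zero (hg i hi) (hw i hi) u v

end

theorem eq_zero_of_mean_sq_eq_zero {N : ℕ} {r : Fin N → ℝ}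
    (h : 1 / (N : ℝ) * ∑ i, r i ^ 2 = 0) (i : Fin N) : r i = 0 := by
  have hN : (N : ℝ) ≠ 0 := Nat.cast_ne_zero.mpr i.pos.ne'
  have hsum : ∑ i, r i ^ 2 = 0 := by simpa [hN] using h
  exact pow_eq_zero_iff two_ne_zero |>.mp <|
    (Finset.sum_eq_zero_iff_of_nonneg fun j _ => sq_nonneg (r j)).mp hsum i (Finset.mem_univ i)

theorem label_noise_covariance_eq_hessian_general
    {m din N : ℕ}
    (F : (Fin m → ℝ) → (Fin din → ℝ) → ℝ)
    (hF : ∀ x, ContDiff ℝ 2 (fun w => F w x))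
    (x : Fin N → (Fin din → ℝ)) (y : Fin N → ℝ)
    (L : (Fin m → ℝ) → ℝ)
    (hL : ∀ w, L w = (1 / (N : ℝ)) * ∑ i, (F w (x i) - y i) ^ 2)
    (w : Fin m → ℝ) (hzero : L w = 0) :
    ∀ k l : Fin m,
      (∑ i, (fderiv ℝ (fun w' => -(2 / (N : ℝ)) * (F w' (x i) - y i)) w (Pi.single k 1)) *
          (fderiv ℝ (fun w' => -(2 / (N : ℝ)) * (F w' (x i) - y i)) w (Pi.single l 1))) =
        (2 / (N : ℝ)) * (iteratedFDeriv ℝ 2 L w) ![Pi.single k 1, Pi.single l 1] := by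
  intro k l
  set g : Fin N → (Fin m → ℝ) → ℝ := fun i w' => F w' (x i) - y i
  have hg : ∀ i, ContDiff ℝ 2 (g i) := fun i => (hF (x i)).sub contDiff_const
  have hres : ∀ i, g i w = 0 := eq_zero_of_mean_sq_eq_zero (hL w ▸ hzero)
  have hnoise : ∀ i z, fderiv ℝ (fun w' => -(2 / (N : ℝ)) * (F w' (x i) - y i)) w z =
      -(2 / (N : ℝ)) * fderiv ℝ (g i) w z := fun i z => by
    rw [fderiv_const_mul ((hg i).differentiable two_ne_zero w)]
    rfl
  have hhess : iteratedFDeriv ℝ 2 L w ![Pi.single k 1, Pi.single l 1] =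
      1 / (N : ℝ) * ∑ i, 2 * (fderiv ℝ (g i) w (Pi.single k 1) *
        fderiv ℝ (g i) w (Pi.single l 1)) := by
    rw [funext hL]
    change iteratedFDeriv ℝ 2 (fun z => (1 / (N : ℝ)) • ∑ i, g i z ^ 2) w _ = _
    rw [iteratedFDeriv_const_smul_apply' (ContDiff.sum fun i _ => (hg i).pow 2).contDiffAt,
      smul_apply, smul_eq_mul,
      iteratedFDeriv_two_sum_sq_apply_of_eq_zero (fun i _ => hg i) (fun i _ => hres i)]
  simp only [hnoise, hhess, Finset.mul_sum]
  exact Finset.sum_congr rfl fun i _ => by ring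

/-- **Label-noise covariance equals `(2/N)` times the Hessian on the zero-loss set.**
With `f(w)_i = -(2/N)(f_w(x_i) - y_i)` and
`Σ(w)_{kl} = ∑ i ∂_{w_k} f(w)_i ∂_{w_l} f(w)_i`, for any `w` with `L(w) = 0` one has
`Σ(w) = (2/N) ∇²L(w)`. -/
theorem label_noise_covariance_eq_hessian
    {m din N : ℕ} (hN : 0 < N)
    (F : (Fin m → ℝ) → (Fin din → ℝ) → ℝ)
    (hF : ∀ x, ContDiff ℝ 2 (fun w => F w x))
    (x : Fin N → (Fin din → ℝ)) (y : Fin N → ℝ)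
    (L : (Fin m → ℝ) → ℝ)
    (hL : ∀ w, L w = (1 / (N : ℝ)) * ∑ i, (F w (x i) - y i) ^ 2)
    (w : Fin m → ℝ) (hzero : L w = 0) :
    ∀ k l : Fin m,
      (∑ i, (fderiv ℝ (fun w' => -(2 / (N : ℝ)) * (F w' (x i) - y i)) w (Pi.single k 1)) *
          (fderiv ℝ (fun w' => -(2 / (N : ℝ)) * (F w' (x i) - y i)) w (Pi.single l 1))) =
        (2 / (N : ℝ)) * (iteratedFDeriv ℝ 2 L w) ![Pi.single k 1, Pi.single l 1] :=
  label_noise_covariance_eq_hessian_general F hF x y L hL w hzero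
end

section
/- For the overparameterized linear model with Dropout, the implicit regularizer is a weighted L² penalty: let w = (u, v) with u, v ∈ ℝ^{d_in}, define f_w^drop(x, η) = ⟨u^{⊙2} − v^{⊙2}, x ⊙ (1+η)⟩ and L̂(w, η) = (1/N) Σ_{i=1}^N (f_w^drop(x_i, η) − y_i)². Then (1/2) Δ_η L̂(w, 0) = (1/N) Σ_{j=1}^{d_in} (u_j² − v_j²)² Σ_{i=1}^N x_{ij}², where x_{ij} is the j-th coordinate of x_i. -/
/-! Along the coordinate line `η = t • e_j` every residual `f_w^drop(x_i, η) - y_i` is affine in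
`t` with slope `(u_j² - v_j²) x_{ij}`, so `t ↦ L̂(w, t • e_j)` is a quadratic whose second
derivative is `(2/N) ∑ i (u_j² - v_j²)² x_{ij}²`. -/

open Finset

section

variable {𝕜 : Type*} [NontriviallyNormedField 𝕜]

theorem iteratedDeriv_two_sq_affine (a b x : 𝕜) :
    iteratedDeriv 2 (fun t => (a + b * t) ^ 2) x = 2 * b ^ 2 := by
  have hderiv : deriv (fun t => (a + b * t) ^ 2) = fun t => 2 * b * a + 2 * b ^ 2 * t := by
    funext t
    rw [deriv_fun_pow (by fun_prop)]
    simp only [Nat.cast_ofNat, Nat.add_one_sub_one, pow_one, deriv_const_add', deriv_const_mul_id']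
    ring
  rw [iteratedDeriv_succ, iteratedDeriv_one, hderiv]
  simp

theorem iteratedDeriv_two_sum_sq_affine {ι : Type*} (s : Finset ι) (a b : ι → 𝕜) (x : 𝕜) :
    iteratedDeriv 2 (fun t => ∑ i ∈ s, (a i + b i * t) ^ 2) x = 2 * ∑ i ∈ s, b i ^ 2 := by
  rw [iteratedDeriv_fun_sum (fun i _ => by fun_prop), mul_sum]
  exact sum_congr rfl fun i _ => iteratedDeriv_two_sq_affine (a i) (b i) x

end

theorem sum_mul_mul_one_add_single {ι R : Type*} [Fintype ι] [DecidableEq ι] [CommSemiring R]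
    (c x : ι → R) (j : ι) (t : R) :
    ∑ k, c k * (x k * (1 + (Pi.single j t : ι → R) k)) = ∑ k, c k * x k + c j * x j * t := by
  simp [mul_add, sum_add_distrib, Pi.single_apply, mul_assoc]

theorem olm_dropout_regularizer_general
    {din N : ℕ}
    (u v : Fin din → ℝ) (x : Fin N → Fin din → ℝ) (y : Fin N → ℝ)
    (Lhat : (Fin din → ℝ) → ℝ)
    (hLhat : ∀ η, Lhat η =
      (1 / (N : ℝ)) * ∑ i,
        ((∑ j, ((u j) ^ 2 - (v j) ^ 2) * (x i j * (1 + η j))) - y i) ^ 2) :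
    (1 / 2) * ∑ j, iteratedDeriv 2 (fun t => Lhat (Pi.single j t)) 0 =
      (1 / (N : ℝ)) * ∑ j, ((u j) ^ 2 - (v j) ^ 2) ^ 2 * ∑ i, (x i j) ^ 2 := by
  set c : Fin din → ℝ := fun j => (u j) ^ 2 - (v j) ^ 2
  have hline : ∀ j, (fun t => Lhat (Pi.single j t)) = fun t =>
      (1 / (N : ℝ)) * ∑ i, ((∑ k, c k * x i k - y i) + c j * x i j * t) ^ 2 := by
    intro j
    funext t
    rw [hLhat]
    congr 1
    refine sum_congr rfl fun i _ => ?_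
    rw [sum_mul_mul_one_add_single c]
    ring
  have hsecond : ∀ j, iteratedDeriv 2 (fun t => Lhat (Pi.single j t)) 0 =
      2 * ((1 / (N : ℝ)) * (c j ^ 2 * ∑ i, x i j ^ 2)) := by
    intro j
    rw [hline, iteratedDeriv_const_mul_field, iteratedDeriv_two_sum_sq_affine, mul_sum]
    simp only [mul_pow, ← mul_sum]
    ring
  simp only [hsecond, ← mul_sum]
  ring

/-- **Dropout regularizer for overparameterized linear models.**
With `f_w^drop(x, η) = ⟨u^{⊙2} - v^{⊙2}, x ⊙ (1+η)⟩` and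
`L̂(w, η) = (1/N) ∑ i (f_w^drop(x_i, η) - y_i)²`, the half `η`-Laplacian at `η = 0`
is `(1/2) Δ_η L̂(w, 0) = (1/N) ∑ j (u_j² - v_j²)² ∑ i x_{ij}²`. -/
theorem olm_dropout_regularizer
    {din N : ℕ} (hN : 0 < N)
    (u v : Fin din → ℝ) (x : Fin N → Fin din → ℝ) (y : Fin N → ℝ)
    (Lhat : (Fin din → ℝ) → ℝ)
    (hLhat : ∀ η, Lhat η =
      (1 / (N : ℝ)) * ∑ i,
        ((∑ j, ((u j) ^ 2 - (v j) ^ 2) * (x i j * (1 + η j))) - y i) ^ 2) :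
    (1 / 2) * ∑ j, iteratedDeriv 2 (fun t => Lhat (Pi.single j t)) 0 =
      (1 / (N : ℝ)) * ∑ j, ((u j) ^ 2 - (v j) ^ 2) ^ 2 * ∑ i, (x i j) ^ 2 :=
  olm_dropout_regularizer_general u v x y Lhat hLhat
end
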